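/- arXiv:1212.3812 — 5 statements merged into one kernel-verified Lean document; each statement's English description precedes it below -/
import Mathlib

section
/- Let M be a seminormed abelian group, N a subgroup of M endowed with the induced seminorm, and L = M/N endowed with the quotient seminorm. Then the induced sequence of Hausdorff completions 0 → N̂ → M̂ → L̂ → 0 is exact: the group homomorphism M̂ → L̂ induced by the quotient map M → L is surjective, and its kernel equals the closure in M̂ of the image of N̂ under the map induced by the inclusion N → M. -/
/-!
Surjectivity: every `y ∈ M ⧸ N` has a preimage in `M` of norm at most `2‖y‖`, unless `y`
already vanishes in the completion. Since `M ⧸ N` is dense in its completion and `M̂` is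
complete, such controlled preimages extend to the whole completion by summing a rapidly
converging series (`controlled_closure_range_of_complete`). Kernel: if `x ∈ M̂` maps to `0`,
pick `g ∈ M` close to `x`; the class of `g` is then small, so it has a small representative `m`,
and `g - m ∈ N` is close to `x`.
-/

open UniformSpace NormedAddCommGroup

theorem AddMonoidHom.closure_range_completion {α β : Type*} [UniformSpace α] [AddGroup α]
    [IsUniformAddGroup α] [UniformSpace β] [AddGroup β] [IsUniformAddGroup β] (φ : α →+ β)
    (hφ : Continuous φ) :
    closure (Set.range (φ.completion hφ)) = closure (Set.range fun a => (φ a : Completion β)) := by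
  have hcoe : (φ.completion hφ) ∘ ((↑) : α → Completion α) = fun a => (φ a : Completion β) :=
    funext (φ.completion_coe hφ)
  refine subset_antisymm (closure_minimal ?_ isClosed_closure) (closure_mono ?_)
  · simpa only [← Set.range_comp, hcoe] using
      (φ.continuous_completion hφ).range_subset_closure_image_dense Completion.denseRange_coe
  · rw [← hcoe]
    exact Set.range_comp_subset_range _ _

namespace NormedAddGroupHom.IsQuotient

variable {G H : Type*} [SeminormedAddCommGroup G] [SeminormedAddCommGroup H]
  {f : NormedAddGroupHom G H}

theorem norm_completion_apply_le (hf : f.IsQuotient) (x : Completion G) :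
    ‖f.completion x‖ ≤ ‖x‖ := by
  have hnorm : ‖f.completion‖ ≤ 1 := by
    rw [norm_completion]
    exact opNorm_le_bound _ zero_le_one fun m => by simpa using hf.norm_le m
  simpa using f.completion.le_of_opNorm_le hnorm x

theorem exists_completion_eq_toCompl_norm_le (hf : f.IsQuotient) (n : H) :
    ∃ g : Completion G, f.completion g = toCompl n ∧ ‖g‖ ≤ 2 * ‖n‖ := by
  rcases (norm_nonneg n).eq_or_lt with hn | hn
  · -- `Ĥ` is Hausdorff, so a point of norm zero in `H` becomes `0` there.
    refine ⟨0, ?_, by simp⟩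
    rw [map_zero, eq_comm, ← norm_eq_zero, norm_toCompl, hn]
  · obtain ⟨m, rfl, hm⟩ := hf.norm_lift hn n
    exact ⟨m, f.completion_coe m, by rw [Completion.norm_coe]; linarith⟩

theorem surjective_completion (hf : f.IsQuotient) : Function.Surjective f.completion := by
  intro y
  have hy : y ∈ (toCompl : NormedAddGroupHom H (Completion H)).range.topologicalClosure :=
    denseRange_toCompl y
  obtain ⟨x, hx, -⟩ := controlled_closure_range_of_complete norm_toCompl two_pos one_pos
    hf.exists_completion_eq_toCompl_norm_le y hy
  exact ⟨x, hx⟩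

theorem completion_eq_zero_iff (hf : f.IsQuotient) (x : Completion G) :
    f.completion x = 0 ↔ x ∈ closure ((↑) '' (f.ker : Set G) : Set (Completion G)) := by
  refine ⟨fun hx => ?_, fun hx => ?_⟩
  · rw [SeminormedAddCommGroup.mem_closure_iff]
    intro ε hε
    obtain ⟨_, ⟨g, rfl⟩, hg⟩ := SeminormedAddCommGroup.mem_closure_iff.mp
      (Completion.denseRange_coe x) (ε / 3) (by positivity)
    have hfg : ‖f g‖ ≤ ‖x - g‖ := by
      calc ‖f g‖ = ‖f.completion (g - x)‖ := by
            rw [map_sub, hx, sub_zero, completion_coe, Completion.norm_coe]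
        _ ≤ ‖x - g‖ := norm_sub_rev (g : Completion G) x ▸ hf.norm_completion_apply_le _
    obtain ⟨m, hm, hm_lt⟩ := hf.norm_lift (ε := ε / 3) (by positivity) (f g)
    refine ⟨↑(g - m), ⟨g - m, by rw [SetLike.mem_coe, mem_ker, map_sub, hm, sub_self], rfl⟩, ?_⟩
    calc ‖x - ↑(g - m)‖ = ‖(x - g) + (m : Completion G)‖ := by rw [Completion.coe_sub, sub_add]
      _ ≤ ‖x - g‖ + ‖(m : Completion G)‖ := norm_add_le _ _
      _ < ε := by rw [Completion.norm_coe]; linarith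
  · refine closure_minimal ?_ f.completion.isClosed_ker hx
    rintro _ ⟨m, hm, rfl⟩
    rw [SetLike.mem_coe, mem_ker, completion_coe, (mem_ker f m).mp hm, Completion.coe_zero]

end NormedAddGroupHom.IsQuotient

/-- Exactness of Hausdorff completions: for a seminormed abelian group `M`, a subgroup `N`
with the induced seminorm and the quotient `M ⧸ N` with the quotient seminorm, the induced
map `M̂ → (M ⧸ N)^` is surjective and its kernel is the closure of the image of `N̂ → M̂`. -/
theorem completion_short_exact {M : Type*} [SeminormedAddCommGroup M] (N : AddSubgroup M) :
    Function.Surjective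
      ((QuotientAddGroup.mk' N).completion N.normedMk.continuous :
        Completion M → Completion (M ⧸ N)) ∧
    ∀ x : Completion M,
      (QuotientAddGroup.mk' N).completion N.normedMk.continuous x = 0 ↔
        x ∈ closure (Set.range
          (N.subtype.completion continuous_subtype_val : Completion N → Completion M)) := by
  have hq := NormedAddGroupHom.isQuotientQuotient N
  have hrange : closure (Set.range (N.subtype.completion continuous_subtype_val)) =
      closure ((↑) '' (N.normedMk.ker : Set M) : Set (Completion M)) := by
    refine (N.subtype.closure_range_completion continuous_subtype_val).trans ?_
    rw [AddSubgroup.ker_normedMk, Set.image_eq_range]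
    rfl
  exact ⟨hq.surjective_completion, fun x => hrange ▸ hq.completion_eq_zero_iff x⟩
end

section
/- Let p be a prime number and K a normed field equipped with an isometric ℚ_p-algebra structure whose norm is ultrametric. Let w be a real number with w ≥ 2/(p−1), and let b, t ∈ K satisfy ‖b‖ ≤ p^{w−2/(p−1)} and ‖t‖ ≤ p^{−w}. Then for every integer k ≥ 1, ‖(b·(b−1)⋯(b−(k−1))/k!)·t^k‖ ≤ p^{−(k+1)/(p−1)}; in particular every such term has norm strictly less than 1. -/
open Finset

/-- Estimate on the coefficients of the binomial series `(1+t)^b`: if `‖b‖ ≤ p^(w-2/(p-1))`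
and `‖t‖ ≤ p^(-w)` with `w ≥ 2/(p-1)`, then for `k ≥ 1` the `k`-th term
`(b(b-1)⋯(b-k+1)/k!)·t^k` has norm at most `p^(-(k+1)/(p-1)) < 1`. -/
theorem binomial_series_term_bound (p : ℕ) [Fact p.Prime] {K : Type*} [NormedField K]
    [Algebra ℚ_[p] K] (hiso : ∀ x : ℚ_[p], ‖algebraMap ℚ_[p] K x‖ = ‖x‖)
    (hultra : ∀ x y : K, ‖x + y‖ ≤ max ‖x‖ ‖y‖)
    (w : ℝ) (hw : 2 / ((p : ℝ) - 1) ≤ w) (b t : K)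
    (hb : ‖b‖ ≤ (p : ℝ) ^ (w - 2 / ((p : ℝ) - 1)))
    (ht : ‖t‖ ≤ (p : ℝ) ^ (-w)) (k : ℕ) (hk : 1 ≤ k) :
    ‖(∏ j ∈ range k, (b - (j : K))) / ((k.factorial : K)) * t ^ k‖ ≤
      (p : ℝ) ^ (-(((k : ℝ) + 1) / ((p : ℝ) - 1))) ∧
    ‖(∏ j ∈ range k, (b - (j : K))) / ((k.factorial : K)) * t ^ k‖ < 1 := by
  have hp2 : 2 ≤ p := (Fact.out : p.Prime).two_le
  have hp1 : (1 : ℝ) < (p : ℝ) := by exact_mod_cast Nat.lt_of_lt_of_le one_lt_two hp2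
  have hp0 : (0 : ℝ) < (p : ℝ) := by linarith
  have hpm1 : (0 : ℝ) < (p : ℝ) - 1 := by linarith
  set c : ℝ := (p : ℝ) with hc
  set e : ℝ := w - 2 / (c - 1) with he
  have he0 : 0 ≤ e := by simp only [he]; linarith
  have hB1 : (1 : ℝ) ≤ c ^ e := Real.one_le_rpow hp1.le he0
  have hBpos : (0 : ℝ) < c ^ e := Real.rpow_pos_of_pos hp0 e
  -- bound each factor
  have hfac : ∀ j ∈ range k, ‖b - (j : K)‖ ≤ c ^ e := by
    intro j _
    have hj : ‖(j : K)‖ ≤ 1 := by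
      have h1 : ((j : K)) = algebraMap ℚ_[p] K (j : ℚ_[p]) := (map_natCast _ _).symm
      rw [h1, hiso]
      exact_mod_cast Padic.norm_int_le_one (p := p) (j : ℤ)
    have := hultra b (-(j : K))
    rw [norm_neg] at this
    calc ‖b - (j : K)‖ = ‖b + (-(j : K))‖ := by rw [sub_eq_add_neg]
      _ ≤ max ‖b‖ ‖(j : K)‖ := this
      _ ≤ c ^ e := max_le hb (hj.trans hB1)
  -- product bound
  have hprod : ‖∏ j ∈ range k, (b - (j : K))‖ ≤ c ^ ((k : ℝ) * e) := by
    calc ‖∏ j ∈ range k, (b - (j : K))‖ ≤ ∏ j ∈ range k, ‖b - (j : K)‖ :=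
          norm_prod_le _ _
      _ ≤ ∏ _j ∈ range k, c ^ e := Finset.prod_le_prod (fun j _ => norm_nonneg _) hfac
      _ = (c ^ e) ^ k := by rw [Finset.prod_const, card_range]
      _ = c ^ ((k : ℝ) * e) := by
          rw [mul_comm, Real.rpow_mul hp0.le, Real.rpow_natCast]
  -- factorial norm
  set v : ℕ := padicValNat p (k.factorial) with hv
  have hkfac : ‖((k.factorial : K))‖ = c ^ (-(v : ℝ)) := by
    have h0 : ((k.factorial : ℚ_[p])) ≠ 0 := by
      exact_mod_cast k.factorial_ne_zero
    have h1 : ((k.factorial : K)) = algebraMap ℚ_[p] K (k.factorial : ℚ_[p]) :=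
      (map_natCast _ _).symm
    rw [h1, hiso, Padic.norm_eq_zpow_neg_valuation h0, ← Real.rpow_intCast]
    congr 1
    rw [Padic.valuation_natCast, hv]
    norm_cast
  -- valuation bound
  have hvb : ((v : ℝ)) * (c - 1) ≤ (k : ℝ) - 1 := by
    have hleg := sub_one_mul_padicValNat_factorial (p := p) k
    have hsum : 1 ≤ (p.digits k).sum := by
      by_contra h
      push_neg at h
      interval_cases hs : (p.digits k).sum
      have hlast := Nat.getLast_digit_ne_zero p (Nat.one_le_iff_ne_zero.mp hk)
      have hmem := List.getLast_mem (l := p.digits k)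
        (by simpa using Nat.digits_ne_nil_iff_ne_zero.mpr (Nat.one_le_iff_ne_zero.mp hk))
      exact hlast ((List.sum_eq_zero_iff.mp hs) _ hmem)
    rw [← hv] at hleg
    have hnat : (p - 1) * v ≤ k - 1 := by omega
    have : ((p - 1 : ℕ) : ℝ) * (v : ℝ) ≤ ((k - 1 : ℕ) : ℝ) := by exact_mod_cast hnat
    rw [Nat.cast_sub (by omega), Nat.cast_sub hk] at this
    push_cast at this ⊢
    linarith
  have hvR : (v : ℝ) ≤ ((k : ℝ) - 1) / (c - 1) := by
    rw [le_div_iff₀ hpm1]; exact hvb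
  -- assemble
  have htk : ‖t ^ k‖ ≤ c ^ ((k : ℝ) * (-w)) := by
    rw [norm_pow]
    calc ‖t‖ ^ k ≤ (c ^ (-w)) ^ k :=
          pow_le_pow_left₀ (norm_nonneg _) ht k
      _ = c ^ ((k : ℝ) * (-w)) := by
          rw [mul_comm, Real.rpow_mul hp0.le, Real.rpow_natCast]
  have hmain : ‖(∏ j ∈ range k, (b - (j : K))) / ((k.factorial : K)) * t ^ k‖ ≤
      c ^ ((k : ℝ) * e + (v : ℝ) + (k : ℝ) * (-w)) := by
    rw [norm_mul, norm_div, hkfac, div_eq_mul_inv, ← Real.rpow_neg hp0.le, neg_neg]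
    have h1 : ‖∏ j ∈ range k, (b - (j : K))‖ * c ^ ((v : ℝ)) ≤
        c ^ ((k : ℝ) * e) * c ^ ((v : ℝ)) :=
      mul_le_mul_of_nonneg_right hprod (Real.rpow_pos_of_pos hp0 _).le
    calc ‖∏ j ∈ range k, (b - (j : K))‖ * c ^ ((v : ℝ)) * ‖t ^ k‖ ≤
          c ^ ((k : ℝ) * e) * c ^ ((v : ℝ)) * (c ^ ((k : ℝ) * (-w))) := by
          apply mul_le_mul h1 htk (norm_nonneg _)
          positivity
      _ = c ^ ((k : ℝ) * e + (v : ℝ) + (k : ℝ) * (-w)) := by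
          rw [← Real.rpow_add hp0, ← Real.rpow_add hp0]
  have hexp : (k : ℝ) * e + (v : ℝ) + (k : ℝ) * (-w) ≤ -(((k : ℝ) + 1) / (c - 1)) := by
    have heq : 2 * (k : ℝ) / (c - 1) - ((k : ℝ) + 1) / (c - 1) = ((k : ℝ) - 1) / (c - 1) := by
      ring
    have hke : (k : ℝ) * e = (k : ℝ) * w - 2 * (k : ℝ) / (c - 1) := by
      simp only [he]; ring
    linarith
  have hle : ‖(∏ j ∈ range k, (b - (j : K))) / ((k.factorial : K)) * t ^ k‖ ≤
      c ^ (-(((k : ℝ) + 1) / (c - 1))) :=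
    hmain.trans (Real.rpow_le_rpow_left_iff hp1 |>.mpr hexp)
  refine ⟨hle, lt_of_le_of_lt hle ?_⟩
  apply Real.rpow_lt_one_of_one_lt_of_neg hp1
  have : (0 : ℝ) < ((k : ℝ) + 1) / (c - 1) := by positivity
  linarith
end

section
/- Let R be a commutative ring, a ∈ R a non-zero-divisor, and g a natural number. Let M, X, X', N be g×g matrices over R such that X and X' are lower triangular (all entries strictly above the diagonal vanish), N is strictly upper triangular (all entries on and below the diagonal vanish), and (1 + a·M)·(1 + a·X)·(1 + a·N) = 1 + a·X', where 1 denotes the identity matrix. Then for all indices i ≥ j the entry X'_{ij} − X_{ij} − M_{ij} lies in the principal ideal (a). -/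
/-- Change of triangular coordinates (lem-Pisic): if `X, X'` are lower triangular, `N` is
strictly upper triangular, `a` is a non-zero-divisor and
`(1 + a•M)(1 + a•X)(1 + a•N) = 1 + a•X'`, then `X' ≡ X + M` below (and on) the diagonal
modulo the ideal `(a)`. -/
theorem triangular_coordinates_congruence {R : Type*} [CommRing R] {a : R}
    (ha : a ∈ nonZeroDivisors R) {g : ℕ} (M X X' N : Matrix (Fin g) (Fin g) R)
    (hX : ∀ i j : Fin g, i < j → X i j = 0)
    (hX' : ∀ i j : Fin g, i < j → X' i j = 0)
    (hN : ∀ i j : Fin g, j ≤ i → N i j = 0)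
    (heq : (1 + a • M) * (1 + a • X) * (1 + a • N) = 1 + a • X') :
    ∀ i j : Fin g, j ≤ i → X' i j - X i j - M i j ∈ Ideal.span {a} := by
  have expand : (1 + a • M) * (1 + a • X) * (1 + a • N) =
      1 + (a • (M + X + N) + (a * a) • (M * X + M * N + X * N)
        + (a * a * a) • (M * X * N)) := by
    simp only [mul_add, add_mul, mul_one, one_mul, Matrix.smul_mul, Matrix.mul_smul,
      smul_smul, smul_add, mul_assoc]
    abel
  rw [expand] at heq
  have key : a • X' = a • (M + X + N) + (a * a) • (M * X + M * N + X * N)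
      + (a * a * a) • (M * X * N) := (add_right_inj (1 : Matrix (Fin g) (Fin g) R)).mp heq.symm
  intro i j hij
  have hentry := congrFun (congrFun key i) j
  simp only [Matrix.add_apply, Matrix.smul_apply, smul_eq_mul] at hentry
  have hcancel : X' i j = (M + X + N) i j
      + a * ((M * X + M * N + X * N) i j + a * (M * X * N) i j) := by
    apply (mul_cancel_left_mem_nonZeroDivisors ha).mp
    rw [hentry]; simp only [Matrix.add_apply]; ring
  rw [Ideal.mem_span_singleton]
  refine ⟨(M * X + M * N + X * N) i j + a * (M * X * N) i j, ?_⟩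
  rw [hcancel]
  simp only [Matrix.add_apply, hN i j hij]
  ring
end

section
/- Let R be a commutative ring with Jacobson radical J, let g be a natural number, and let P be a g×g matrix over R such that every entry of P − 1 lies in J, where 1 denotes the identity matrix. Then there exists a unique g×g matrix U over R which is upper triangular with all diagonal entries equal to 1 and such that P·U is lower triangular; moreover, all off-diagonal entries of this U lie in J. -/
open Matrix Finset

namespace UnitriAux

variable {R : Type*} [CommRing R] {g : ℕ}

lemma isUnit_of_sub_one_mem_jacobson {x : R}
    (h : x - 1 ∈ Ideal.jacobson (⊥ : Ideal R)) : IsUnit x := by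
  have := Ideal.mem_jacobson_bot.mp h 1
  simpa using this

def A (P : Matrix (Fin g) (Fin g) R) (j : Fin g) : Matrix (Fin j.val) (Fin j.val) R :=
  fun a b => P (Fin.castLE j.isLt.le a) (Fin.castLE j.isLt.le b)

def bvec (P : Matrix (Fin g) (Fin g) R) (j : Fin g) : Fin j.val → R :=
  fun a => P (Fin.castLE j.isLt.le a) j

noncomputable def uvec (P : Matrix (Fin g) (Fin g) R) (j : Fin g) : Fin j.val → R :=
  -((A P j)⁻¹ *ᵥ bvec P j)

noncomputable def Umat (P : Matrix (Fin g) (Fin g) R) : Matrix (Fin g) (Fin g) R :=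
  fun i j => if h : (i : ℕ) < (j : ℕ) then uvec P j ⟨i, h⟩ else if i = j then 1 else 0

lemma sum_split (j : Fin g) (f : Fin g → R) (hf : ∀ k, j < k → f k = 0) :
    ∑ k, f k = (∑ a : Fin j.val, f (Fin.castLE j.isLt.le a)) + f j := by
  have h1 : ∑ k ∈ Finset.univ.filter (fun k : Fin g => (k:ℕ) ≤ (j:ℕ)), f k = ∑ k, f k := by
    refine Finset.sum_subset (Finset.subset_univ _) (fun x _ hx => ?_)
    refine hf x ?_
    simp only [Finset.mem_filter, Finset.mem_univ, true_and, not_le] at hx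
    exact hx
  have h2 : (Finset.univ.filter (fun k : Fin g => (k:ℕ) ≤ (j:ℕ)))
      = insert j (Finset.univ.filter (fun k : Fin g => (k:ℕ) < (j:ℕ))) := by
    ext k
    simp [Nat.le_iff_lt_or_eq, Fin.ext_iff, or_comm]
  have h3 : (Finset.univ.filter (fun k : Fin g => (k:ℕ) < (j:ℕ)))
      = Finset.univ.map (Fin.castLEEmb j.isLt.le) := by
    ext k
    simp only [Finset.mem_filter, Finset.mem_univ, true_and, Finset.mem_map]
    constructor
    · intro hk
      exact ⟨⟨k, hk⟩, by simp [Fin.ext_iff]⟩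
    · rintro ⟨a, -, rfl⟩
      simpa [Fin.castLEEmb] using a.isLt
  rw [← h1, h2, Finset.sum_insert (by simp), h3, Finset.sum_map]
  simp [Fin.castLEEmb, add_comm]

section
variable (P : Matrix (Fin g) (Fin g) R)

lemma det_A_isUnit
    (hP : ∀ i j : Fin g, P i j - (1 : Matrix (Fin g) (Fin g) R) i j ∈ Ideal.jacobson (⊥ : Ideal R))
    (j : Fin g) : IsUnit (A P j).det := by
  set J := Ideal.jacobson (⊥ : Ideal R)
  set π := Ideal.Quotient.mk J
  have hmap : (A P j).map π = 1 := by
    ext a b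
    have h := hP (Fin.castLE j.isLt.le a) (Fin.castLE j.isLt.le b)
    have hone : (1 : Matrix (Fin g) (Fin g) R) (Fin.castLE j.isLt.le a) (Fin.castLE j.isLt.le b)
        = (1 : Matrix (Fin j.val) (Fin j.val) R) a b := by
      simp [Matrix.one_apply, Fin.ext_iff]
    have : π ((A P j) a b) = π ((1 : Matrix (Fin j.val) (Fin j.val) R) a b) := by
      refine Ideal.Quotient.eq.mpr ?_
      rw [← hone]
      exact h
    simp only [Matrix.map_apply]
    rw [this]
    by_cases hab : a = b <;> simp [Matrix.one_apply, hab]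
  have hdet : π (A P j).det = 1 := by
    rw [RingHom.map_det, RingHom.mapMatrix_apply, hmap, Matrix.det_one]
  refine isUnit_of_sub_one_mem_jacobson ?_
  have : π ((A P j).det - 1) = 0 := by simp [hdet]
  exact (Ideal.Quotient.eq_zero_iff_mem).mp this

lemma AmulV_uvec
    (hP : ∀ i j : Fin g, P i j - (1 : Matrix (Fin g) (Fin g) R) i j ∈ Ideal.jacobson (⊥ : Ideal R))
    (j : Fin g) : A P j *ᵥ uvec P j = -(bvec P j) := by
  have hu := det_A_isUnit P hP j
  unfold uvec
  rw [Matrix.mulVec_neg, Matrix.mulVec_mulVec, Matrix.mul_nonsing_inv _ hu, Matrix.one_mulVec]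

lemma col_eq
    (hP : ∀ i j : Fin g, P i j - (1 : Matrix (Fin g) (Fin g) R) i j ∈ Ideal.jacobson (⊥ : Ideal R))
    (j : Fin g) (v : Fin j.val → R) (hv : A P j *ᵥ v = -(bvec P j)) :
    v = uvec P j := by
  have hu := det_A_isUnit P hP j
  have h1 : (A P j)⁻¹ *ᵥ (A P j *ᵥ v) = v := by
    rw [Matrix.mulVec_mulVec, Matrix.nonsing_inv_mul _ hu, Matrix.one_mulVec]
  rw [hv] at h1
  rw [← h1]
  unfold uvec
  rw [Matrix.mulVec_neg]

end

end UnitriAux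

open UnitriAux in
/-- If every entry of `P - 1` lies in the Jacobson radical of `R`, then there is a unique
upper unitriangular matrix `U` making `P * U` lower triangular; moreover all off-diagonal
entries of this `U` lie in the Jacobson radical. -/
theorem exists_unique_unitriangular_correction {R : Type*} [CommRing R] {g : ℕ}
    (P : Matrix (Fin g) (Fin g) R)
    (hP : ∀ i j : Fin g, P i j - (1 : Matrix (Fin g) (Fin g) R) i j ∈ Ideal.jacobson (⊥ : Ideal R)) :
    (∃! U : Matrix (Fin g) (Fin g) R,
      (∀ i j : Fin g, j < i → U i j = 0) ∧ (∀ i : Fin g, U i i = 1) ∧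
      (∀ i j : Fin g, i < j → (P * U) i j = 0)) ∧
    (∀ U : Matrix (Fin g) (Fin g) R,
      (∀ i j : Fin g, j < i → U i j = 0) → (∀ i : Fin g, U i i = 1) →
      (∀ i j : Fin g, i < j → (P * U) i j = 0) →
      ∀ i j : Fin g, i ≠ j → U i j ∈ Ideal.jacobson (⊥ : Ideal R)) := by
  classical
  constructor
  · -- existence and uniqueness
    refine ⟨Umat P, ⟨?_, ?_, ?_⟩, ?_⟩
    · intro i j hji
      simp only [Umat]
      rw [dif_neg (by omega), if_neg (by exact fun h => absurd h (by exact Fin.ne_of_gt hji))]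
    · intro i
      simp [Umat]
    · intro i j hij
      rw [Matrix.mul_apply]
      have hzero : ∀ k, j < k → P i k * Umat P k j = 0 := by
        intro k hk
        have : Umat P k j = 0 := by
          simp only [Umat]
          rw [dif_neg (by omega), if_neg (Fin.ne_of_gt hk)]
        rw [this, mul_zero]
      rw [sum_split j _ hzero]
      have hdiag : Umat P j j = 1 := by simp [Umat]
      have hcol : ∀ a : Fin j.val,
          Umat P (Fin.castLE j.isLt.le a) j = uvec P j a := by
        intro a
        simp only [Umat]
        rw [dif_pos (by simpa using a.isLt)]
        exact congrArg _ (Fin.ext rfl)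
      have hrow : ∀ b : Fin j.val, P i (Fin.castLE j.isLt.le b)
          = A P j ⟨i, hij⟩ b := by
        intro b
        simp [A]
      have hsum : (∑ a : Fin j.val, P i (Fin.castLE j.isLt.le a)
            * Umat P (Fin.castLE j.isLt.le a) j)
          = (A P j *ᵥ uvec P j) ⟨i, hij⟩ := by
        rw [Matrix.mulVec]
        simp only [dotProduct]
        refine Finset.sum_congr rfl (fun a _ => ?_)
        rw [hcol a, hrow a]
      rw [hsum, AmulV_uvec P hP, hdiag, mul_one]
      simp [bvec]
    · -- uniqueness
      intro U' ⟨hl, hd, hu⟩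
      ext i j
      rcases lt_trichotomy i j with hij | rfl | hji
      · -- compute column j of U'
        set v : Fin j.val → R := fun a => U' (Fin.castLE j.isLt.le a) j with hv
        have hveq : A P j *ᵥ v = -(bvec P j) := by
          funext a
          have hrowlt : (Fin.castLE j.isLt.le a) < j := by
            simpa [Fin.lt_def] using a.isLt
          have h0 := hu (Fin.castLE j.isLt.le a) j hrowlt
          rw [Matrix.mul_apply] at h0
          have hzero : ∀ k, j < k → P (Fin.castLE j.isLt.le a) k * U' k j = 0 := by
            intro k hk
            rw [hl k j hk, mul_zero]
          rw [sum_split j _ hzero, hd j, mul_one] at h0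
          have : (∑ b : Fin j.val, P (Fin.castLE j.isLt.le a) (Fin.castLE j.isLt.le b)
              * U' (Fin.castLE j.isLt.le b) j) = (A P j *ᵥ v) a := by
            rw [Matrix.mulVec]
            simp only [dotProduct]
            rfl
          rw [this] at h0
          have := eq_neg_of_add_eq_zero_left h0
          simpa [bvec] using this
        have hvu := col_eq P hP j v hveq
        have : U' i j = v ⟨i, hij⟩ := rfl
        rw [this, hvu]
        simp only [Umat]
        rw [dif_pos (show (i:ℕ) < (j:ℕ) from hij)]
      · rw [hd i]
        simp [Umat]
      · rw [hl i j hji]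
        simp only [Umat]
        rw [dif_neg (by omega), if_neg (Fin.ne_of_gt hji)]
  · -- Jacobson membership
    intro U hl hd hu i j hij
    rcases lt_or_gt_of_ne hij with hij' | hji
    · set J := Ideal.jacobson (⊥ : Ideal R)
      set π := Ideal.Quotient.mk J
      have hPmap : P.map π = 1 := by
        ext a b
        have h := hP a b
        have : π (P a b) = π ((1 : Matrix (Fin g) (Fin g) R) a b) :=
          Ideal.Quotient.eq.mpr h
        simp only [Matrix.map_apply]
        rw [this]
        by_cases hab : a = b <;> simp [Matrix.one_apply, hab]
      have hmul : (P * U).map π = U.map π := by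
        rw [Matrix.map_mul, hPmap, one_mul]
      have h0 : π ((P * U) i j) = 0 := by
        rw [hu i j hij', map_zero]
      have : π (U i j) = 0 := by
        have := congrFun (congrFun hmul i) j
        simp only [Matrix.map_apply] at this
        rw [← this, h0]
      exact Ideal.Quotient.eq_zero_iff_mem.mp this
    · rw [hl i j hji]
      exact Ideal.zero_mem _
end

section
/- Let p be a prime number and g ≥ 1 a natural number. Let A be an invertible g×g matrix over the ring ℤ_p of p-adic integers whose reduction modulo p is upper triangular, i.e. A_{ij} ∈ pℤ_p whenever i > j. Then A admits a unique factorization A = n·b, where n is a lower triangular matrix over ℤ_p with all diagonal entries equal to 1 and all entries strictly below the diagonal in pℤ_p, and b is an upper triangular matrix which is invertible over ℤ_p. -/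
open Finset

section IwahoriAux

variable {p : ℕ} [Fact p.Prime] {g : ℕ}

noncomputable def luAux (A : Matrix (Fin g) (Fin g) ℤ_[p]) : Fin g → Fin g → ℤ_[p] :=
  fun i j =>
    if hji : j < i then
      Ring.inverse (luAux A j j) *
        (A i j - ∑ k : Fin g, if hk : k < j then luAux A i k * luAux A k j else 0)
    else
      A i j - ∑ k : Fin g, if hk : k < i then luAux A i k * luAux A k j else 0
termination_by i j => 2 * (min i.val j.val) + (if j < i then 1 else 0)
decreasing_by
  all_goals simp only [Fin.lt_def] at *
  all_goals split_ifs <;> omega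

lemma sum_dite_lt (f : Fin g → ℤ_[p]) (t : Fin g) :
    (∑ k : Fin g, if _ : k < t then f k else 0) = ∑ k ∈ Iio t, f k := by
  simp only [dite_eq_ite]
  rw [← Finset.sum_filter]
  congr 1
  ext k
  simp

lemma luAux_eq_of_lt {A : Matrix (Fin g) (Fin g) ℤ_[p]} {i j : Fin g} (h : j < i) :
    luAux A i j = Ring.inverse (luAux A j j) *
      (A i j - ∑ k ∈ Iio j, luAux A i k * luAux A k j) := by
  rw [luAux]
  simp only [h, dif_pos]
  rw [sum_dite_lt]

lemma luAux_eq_of_le {A : Matrix (Fin g) (Fin g) ℤ_[p]} {i j : Fin g} (h : ¬ j < i) :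
    luAux A i j = A i j - ∑ k ∈ Iio i, luAux A i k * luAux A k j := by
  rw [luAux]
  simp only [h, dif_neg, not_false_iff]
  rw [sum_dite_lt]

lemma isUnit_sub_mem {a b : ℤ_[p]} (ha : IsUnit a) (hb : b ∈ Ideal.span {(p : ℤ_[p])}) :
    IsUnit (a - b) := by
  by_contra h
  rw [← IsLocalRing.notMem_maximalIdeal, not_not, PadicInt.maximalIdeal_eq_span_p] at h
  have : a ∈ Ideal.span {(p : ℤ_[p])} := by
    have := Ideal.add_mem _ h hb
    simpa using this
  rw [← PadicInt.maximalIdeal_eq_span_p, IsLocalRing.mem_maximalIdeal, mem_nonunits_iff] at this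
  exact this ha

section withA

variable {A : Matrix (Fin g) (Fin g) ℤ_[p]} (hA : IsUnit A)
  (hAtri : ∀ i j : Fin g, j < i → A i j ∈ Ideal.span {(p : ℤ_[p])})

include hA hAtri in
lemma diag_isUnit (i : Fin g) : IsUnit (A i i) := by
  have hmax : (Ideal.span {(p : ℤ_[p])}).IsMaximal :=
    by rw [← PadicInt.maximalIdeal_eq_span_p]; infer_instance
  set f := Ideal.Quotient.mk (Ideal.span {(p : ℤ_[p])}) with hf
  have hdet : IsUnit A.det := (Matrix.isUnit_iff_isUnit_det A).mp hA
  have hmap : (A.map f).BlockTriangular id := by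
    intro a b hab
    rw [Matrix.map_apply, Ideal.Quotient.eq_zero_iff_mem]
    exact hAtri a b hab
  have hd : f A.det = ∏ k, f (A k k) := by
    rw [RingHom.map_det, RingHom.mapMatrix_apply, Matrix.det_of_upperTriangular hmap]
    rfl
  have hdu : f A.det ≠ 0 := by
    rw [Ne, Ideal.Quotient.eq_zero_iff_mem, ← PadicInt.maximalIdeal_eq_span_p]
    exact IsLocalRing.notMem_maximalIdeal.mpr hdet
  by_contra h
  apply hdu
  rw [hd]
  refine Finset.prod_eq_zero (Finset.mem_univ i) ?_
  rw [Ideal.Quotient.eq_zero_iff_mem, ← PadicInt.maximalIdeal_eq_span_p]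
  rwa [IsLocalRing.mem_maximalIdeal, mem_nonunits_iff]

include hAtri in
lemma luAux_below_mem : ∀ j i : Fin g, j < i → luAux A i j ∈ Ideal.span {(p : ℤ_[p])} := by
  suffices H : ∀ m : ℕ, ∀ j i : Fin g, j.val < m → j < i →
      luAux A i j ∈ Ideal.span {(p : ℤ_[p])} by
    exact fun j i h => H (j.val + 1) j i (Nat.lt_succ_self _) h
  intro m
  induction m with
  | zero => exact fun j i h => absurd h (Nat.not_lt_zero _)
  | succ m ih =>
    intro j i hm hji
    rw [luAux_eq_of_lt hji]
    refine Ideal.mul_mem_left _ _ (Ideal.sub_mem _ (hAtri i j hji) (Ideal.sum_mem _ ?_))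
    intro k hk
    rw [Finset.mem_Iio] at hk
    exact Ideal.mul_mem_right _ _ (ih k i (by omega) (hk.trans hji))

include hA hAtri in
lemma luAux_diag_isUnit (i : Fin g) : IsUnit (luAux A i i) := by
  rw [luAux_eq_of_le (lt_irrefl i)]
  refine isUnit_sub_mem (diag_isUnit hA hAtri i) (Ideal.sum_mem _ ?_)
  intro k hk
  rw [Finset.mem_Iio] at hk
  exact Ideal.mul_mem_right _ _ (luAux_below_mem hAtri k i hk)

end withA

lemma sum_split (f : Fin g → ℤ_[p]) (t : Fin g) (hf : ∀ k, t < k → f k = 0) :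
    ∑ k : Fin g, f k = (∑ k ∈ Iio t, f k) + f t := by
  rw [← Finset.sum_subset (Finset.subset_univ (Iic t))
    (fun k _ hk => hf k (by simpa using hk))]
  rw [← Finset.Iio_insert, Finset.sum_insert (by simp), add_comm]

end IwahoriAux

section Main

variable {p : ℕ} [Fact p.Prime] {g : ℕ}

noncomputable def nMat (A : Matrix (Fin g) (Fin g) ℤ_[p]) : Matrix (Fin g) (Fin g) ℤ_[p] :=
  Matrix.of fun i j => if j < i then luAux A i j else if i = j then 1 else 0

noncomputable def bMat (A : Matrix (Fin g) (Fin g) ℤ_[p]) : Matrix (Fin g) (Fin g) ℤ_[p] :=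
  Matrix.of fun i j => if j < i then 0 else luAux A i j

variable {A : Matrix (Fin g) (Fin g) ℤ_[p]} (hA : IsUnit A)
  (hAtri : ∀ i j : Fin g, j < i → A i j ∈ Ideal.span {(p : ℤ_[p])})

include hA hAtri in
lemma mul_nMat_bMat : A = nMat A * bMat A := by
  ext i j
  rw [Matrix.mul_apply]
  rcases lt_or_ge j i with h | h
  · rw [sum_split _ j (fun k hk => by
      simp only [bMat, nMat, Matrix.of_apply, hk, if_pos, mul_zero])]
    have h1 : ∀ k ∈ Iio j, nMat A i k * bMat A k j = luAux A i k * luAux A k j := by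
      intro k hk
      rw [Finset.mem_Iio] at hk
      simp only [nMat, bMat, Matrix.of_apply, if_pos (hk.trans h), if_neg (not_lt.mpr hk.le)]
    rw [Finset.sum_congr rfl h1]
    have h2 : nMat A i j * bMat A j j = luAux A i j * luAux A j j := by
      simp only [nMat, bMat, Matrix.of_apply, if_pos h, if_neg (lt_irrefl j)]
    rw [h2, luAux_eq_of_lt h, mul_comm (Ring.inverse (luAux A j j)),
      Ring.inverse_mul_cancel_right _ _ (luAux_diag_isUnit hA hAtri j)]
    ring
  · rw [sum_split _ i (fun k hk => by
      simp only [nMat, Matrix.of_apply, if_neg (asymm hk), if_neg hk.ne, zero_mul])]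
    have h1 : ∀ k ∈ Iio i, nMat A i k * bMat A k j = luAux A i k * luAux A k j := by
      intro k hk
      rw [Finset.mem_Iio] at hk
      simp only [nMat, bMat, Matrix.of_apply, if_pos hk,
        if_neg (not_lt.mpr (le_trans hk.le h))]
    rw [Finset.sum_congr rfl h1]
    have h2 : nMat A i i * bMat A i j = luAux A i j := by
      simp only [nMat, bMat, Matrix.of_apply, if_neg (lt_irrefl i), if_pos rfl, if_true,
        if_neg (not_lt.mpr h), one_mul]
    rw [h2, luAux_eq_of_le (not_lt.mpr h)]
    ring

include hA hAtri in
lemma bMat_isUnit : IsUnit (bMat A) := by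
  rw [Matrix.isUnit_iff_isUnit_det]
  have htri : (bMat A).BlockTriangular id := by
    intro a b hab
    exact if_pos hab
  rw [Matrix.det_of_upperTriangular htri]
  refine Finset.prod_induction _ IsUnit (fun _ _ => IsUnit.mul) isUnit_one fun k _ => ?_
  simpa only [bMat, Matrix.of_apply, if_neg (lt_irrefl k)] using luAux_diag_isUnit hA hAtri k

end Main

/-- Iwahori decomposition: an invertible matrix over `ℤ_p` whose reduction mod `p` is upper
triangular factors uniquely as `n * b` with `n` lower triangular unipotent congruent to the
identity mod `p`, and `b` upper triangular and invertible. -/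
theorem iwahori_decomposition (p : ℕ) [Fact p.Prime] {g : ℕ} (hg : 1 ≤ g)
    (A : Matrix (Fin g) (Fin g) ℤ_[p]) (hA : IsUnit A)
    (hAtri : ∀ i j : Fin g, j < i → A i j ∈ Ideal.span {(p : ℤ_[p])}) :
    ∃! nb : Matrix (Fin g) (Fin g) ℤ_[p] × Matrix (Fin g) (Fin g) ℤ_[p],
      (∀ i j : Fin g, i < j → nb.1 i j = 0) ∧
      (∀ i : Fin g, nb.1 i i = 1) ∧
      (∀ i j : Fin g, j < i → nb.1 i j ∈ Ideal.span {(p : ℤ_[p])}) ∧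
      (∀ i j : Fin g, j < i → nb.2 i j = 0) ∧
      IsUnit nb.2 ∧
      A = nb.1 * nb.2 := by
  refine ⟨(nMat A, bMat A), ⟨?_, ?_, ?_, ?_, bMat_isUnit hA hAtri, mul_nMat_bMat hA hAtri⟩, ?_⟩
  · intro i j hij
    simp [nMat, asymm hij, hij.ne]
  · intro i
    simp [nMat]
  · intro i j hji
    simpa [nMat, hji] using luAux_below_mem hAtri j i hji
  · intro i j hji
    simp [bMat, hji]
  · rintro ⟨n, b⟩ ⟨hn0, hn1, _, hb0, hbu, hAeq⟩
    dsimp only at hn0 hn1 hb0 hbu hAeq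
    have hbtri : b.BlockTriangular id := fun a b' hab => hb0 a b' hab
    have hbdiag : ∀ k : Fin g, IsUnit (b k k) := by
      intro k
      have hdet : IsUnit b.det := (Matrix.isUnit_iff_isUnit_det b).mp hbu
      rw [Matrix.det_of_upperTriangular hbtri,
        ← Finset.mul_prod_erase _ _ (Finset.mem_univ k)] at hdet
      exact isUnit_of_mul_isUnit_left hdet
    have hrec : ∀ i j : Fin g, A i j =
        (∑ k ∈ Finset.Iio (min i j), n i k * b k j) + n i (min i j) * b (min i j) j := by
      intro i j
      have h0 : A i j = ∑ k : Fin g, n i k * b k j := by rw [hAeq, Matrix.mul_apply]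
      rw [h0]
      refine sum_split _ _ fun k hk => ?_
      rcases min_lt_iff.mp hk with h | h
      · rw [hn0 i k h, zero_mul]
      · rw [hb0 k j h, mul_zero]
    have key : ∀ m : ℕ, ∀ i j : Fin g,
        2 * min i.val j.val + (if j < i then 1 else 0) < m →
        (j < i → n i j = luAux A i j) ∧ (¬ j < i → b i j = luAux A i j) := by
      intro m
      induction m with
      | zero => intro i j hm; omega
      | succ m ih =>
        intro i j hm
        constructor
        · intro hji
          have hji' : j.val < i.val := Fin.lt_def.mp hji
          have hm' : 2 * j.val + 1 < m + 1 := by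
            rwa [min_eq_right (le_of_lt hji'), if_pos hji] at hm
          have hminf : min i j = j := min_eq_right hji.le
          have h1 := hrec i j
          rw [hminf] at h1
          have hbj : b j j = luAux A j j :=
            (ih j j (by rw [min_self, if_neg (lt_irrefl j)]; omega)).2 (lt_irrefl j)
          have hsum : ∑ k ∈ Finset.Iio j, n i k * b k j
              = ∑ k ∈ Finset.Iio j, luAux A i k * luAux A k j := by
            refine Finset.sum_congr rfl fun k hk => ?_
            rw [Finset.mem_Iio] at hk
            have hk' : k.val < j.val := Fin.lt_def.mp hk
            rw [(ih i k (by
              rw [min_eq_right (by omega : k.val ≤ i.val), if_pos (hk.trans hji)]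
              omega)).1 (hk.trans hji),
              (ih k j (by
              rw [min_eq_left (le_of_lt hk'), if_neg (asymm hk)]
              omega)).2 (not_lt.mpr hk.le)]
          have h2 : n i j * b j j = A i j - ∑ k ∈ Finset.Iio j, luAux A i k * luAux A k j := by
            rw [← hsum, h1]
            ring
          calc n i j = n i j * b j j * Ring.inverse (b j j) :=
                (Ring.mul_inverse_cancel_right _ _ (hbdiag j)).symm
            _ = luAux A i j := by
                rw [h2, hbj, luAux_eq_of_lt hji, mul_comm]
        · intro hij
          have hij' : i.val ≤ j.val := Fin.le_def.mp (not_lt.mp hij)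
          have hm' : 2 * i.val < m + 1 := by
            rwa [min_eq_left hij', if_neg hij] at hm
          have hminf : min i j = i := min_eq_left (not_lt.mp hij)
          have h1 := hrec i j
          rw [hminf, hn1 i, one_mul] at h1
          have hsum : ∑ k ∈ Finset.Iio i, n i k * b k j
              = ∑ k ∈ Finset.Iio i, luAux A i k * luAux A k j := by
            refine Finset.sum_congr rfl fun k hk => ?_
            rw [Finset.mem_Iio] at hk
            have hk' : k.val < i.val := Fin.lt_def.mp hk
            rw [(ih i k (by
              rw [min_eq_right (le_of_lt hk'), if_pos hk]
              omega)).1 hk,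
              (ih k j (by
              rw [min_eq_left (by omega : k.val ≤ j.val), if_neg (by
                intro hc
                exact absurd (Fin.lt_def.mp hc) (by omega))]
              omega)).2 (by
                intro hc
                exact absurd (Fin.lt_def.mp hc) (by omega))]
          rw [luAux_eq_of_le hij, ← hsum, h1]
          ring
    have hkey : ∀ i j : Fin g, (j < i → n i j = luAux A i j) ∧ (¬ j < i → b i j = luAux A i j) :=
      fun i j => key (2 * min i.val j.val + 2) i j (by split_ifs <;> omega)
    have hn : n = nMat A := by
      ext i j
      rcases lt_trichotomy j i with h | h | h
      · rw [(hkey i j).1 h]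
        simp [nMat, h]
      · subst h
        simp [nMat, hn1]
      · rw [hn0 i j h]
        simp [nMat, asymm h, h.ne]
    have hb : b = bMat A := by
      ext i j
      rcases lt_or_ge j i with h | h
      · rw [hb0 i j h]
        simp [bMat, h]
      · rw [(hkey i j).2 (not_lt.mpr h)]
        simp [bMat, not_lt.mpr h]
    rw [hn, hb]
end
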